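/- arXiv:2307.02772 — 2 statements merged into one kernel-verified Lean document; each statement's English description precedes it below -/
import Mathlib

section
/- Let lg denote the function lg t = max{log₂ t, 0} on the reals. Let x, y, u, M be real numbers with x > 0, y > 0, and 0 ≤ u ≤ M. Then lg(lg((x + y + M)/y)) − lg(lg((y + M)/y)) ≤ 2·log₂((x + y + u)/(y + u)). -/
/-!
On `[0, ∞)` the function `lg` is Lipschitz with constant `1 / ln 2 ≤ 2`, because
`log₂ (s / t) ≤ (s / t - 1) / ln 2 ≤ 2 (s - t)` for `1 ≤ t ≤ s`. Applying this to
`s = log₂ a`, `t = log₂ b` bounds the increase of `lg lg` by `2 log₂ (a / b)`, and here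
`a / b = (x + y + M) / (y + M) = 1 + x / (y + M)`, which only grows when `M` is lowered to `u`.
-/

/-- `lg t = max (log₂ t) 0`. -/
noncomputable def lg (t : ℝ) : ℝ := max (Real.logb 2 t) 0

open Real

lemma logb_two_le_two_mul_sub_one {t : ℝ} (ht : 1 ≤ t) : logb 2 t ≤ 2 * (t - 1) := by
  have hlog2 : 1 / 2 < log 2 := by linarith [log_two_gt_d9]
  have hlog : log t ≤ t - 1 := log_le_sub_one_of_pos (by linarith)
  rw [logb, div_le_iff₀ (by linarith)]
  nlinarith

lemma lg_of_one_le {t : ℝ} (ht : 1 ≤ t) : lg t = logb 2 t :=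
  max_eq_left (logb_nonneg one_lt_two ht)

lemma lg_of_nonneg_of_le_one {t : ℝ} (h₀ : 0 ≤ t) (h₁ : t ≤ 1) : lg t = 0 :=
  max_eq_right (logb_nonpos one_lt_two h₀ h₁)

lemma lg_sub_lg_le_two_mul_sub {s t : ℝ} (ht : 0 ≤ t) (hts : t ≤ s) :
    lg s - lg t ≤ 2 * (s - t) := by
  rcases le_or_gt t 1 with ht₁ | ht₁
  · rw [lg_of_nonneg_of_le_one ht ht₁]
    rcases le_or_gt s 1 with hs₁ | hs₁
    · rw [lg_of_nonneg_of_le_one (ht.trans hts) hs₁]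
      linarith
    · rw [lg_of_one_le hs₁.le]
      linarith [logb_two_le_two_mul_sub_one hs₁.le]
  · have hs₁ : 1 ≤ s := ht₁.le.trans hts
    have hst : 1 ≤ s / t := (one_le_div (by linarith)).2 hts
    have hratio : s / t - 1 ≤ s - t := by
      rw [div_sub_one (by positivity), div_le_iff₀ (by positivity)]
      nlinarith
    calc lg s - lg t = logb 2 (s / t) := by
          rw [lg_of_one_le hs₁, lg_of_one_le ht₁.le, logb_div (by positivity) (by positivity)]
      _ ≤ 2 * (s / t - 1) := logb_two_le_two_mul_sub_one hst
      _ ≤ 2 * (s - t) := by linarith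

lemma lg_lg_sub_lg_lg_le {a b : ℝ} (hb : 1 ≤ b) (hab : b ≤ a) :
    lg (lg a) - lg (lg b) ≤ 2 * logb 2 (a / b) := by
  have ha : 1 ≤ a := hb.trans hab
  rw [lg_of_one_le ha, lg_of_one_le hb, logb_div (by positivity) (by positivity)]
  exact lg_sub_lg_le_two_mul_sub (logb_nonneg one_lt_two hb)
    (logb_le_logb_of_le one_lt_two (by positivity) hab)

/-- Computational core of Lemma 7.9: for reals `x > 0`, `y > 0`, `0 ≤ u ≤ M`,
`lg lg ((x+y+M)/y) − lg lg ((y+M)/y) ≤ 2·log₂((x+y+u)/(y+u))`. -/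
theorem stmt_14 (x y u M : ℝ) (hx : 0 < x) (hy : 0 < y) (hu : 0 ≤ u) (huM : u ≤ M) :
    lg (lg ((x + y + M) / y)) - lg (lg ((y + M) / y)) ≤
      2 * Real.logb 2 ((x + y + u) / (y + u)) := by
  have hyu : 0 < y + u := by linarith
  have hyM : 0 < y + M := by linarith
  have hb : 1 ≤ (y + M) / y := (one_le_div hy).2 (by linarith)
  have hab : (y + M) / y ≤ (x + y + M) / y := div_le_div_of_nonneg_right (by linarith) hy.le
  have hcancel : (x + y + M) / y / ((y + M) / y) = (x + y + M) / (y + M) := by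
    field_simp
  have hmono : (x + y + M) / (y + M) ≤ (x + y + u) / (y + u) := by
    rw [div_le_div_iff₀ hyM hyu]
    nlinarith
  calc lg (lg ((x + y + M) / y)) - lg (lg ((y + M) / y))
      ≤ 2 * logb 2 ((x + y + M) / (y + M)) := hcancel ▸ lg_lg_sub_lg_lg_le hb hab
    _ ≤ 2 * logb 2 ((x + y + u) / (y + u)) := by
      gcongr
      · norm_num
      · exact div_pos (by linarith) hyM
end

section
/- Let lg denote the function lg t = max{log₂ t, 0} on the reals. Let s, b, a be real numbers with 1 ≤ s ≤ b ≤ a. Then lg(lg(a/s)) − lg(lg(b/s)) ≤ 2·(log₂ a − log₂ b). -/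
/-!
On `[1, ∞)` the function `log₂` has slope at most `1 / log 2 < 2`, and `t ↦ max t 1` has
slope at most `1`; since `lg t = log₂ (max t 1)` for `t ≥ 0`, the function `lg` can increase
by at most twice the increase of its argument on `[0, ∞)`. Applied to `log₂ (b / s)` and
`log₂ (a / s)`, which are nonnegative and differ by `log₂ a - log₂ b`, this is the theorem.
-/

open Real

lemma lg_eq_logb_max_one {t : ℝ} (ht : 0 ≤ t) : lg t = logb 2 (max t 1) := by
  rcases le_total t 1 with h | h
  · rw [lg, max_eq_right h, logb_one, max_eq_right (logb_nonpos one_lt_two ht h)]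
  · rw [lg, max_eq_left h, max_eq_left (logb_nonneg one_lt_two h)]

lemma logb_two_sub_logb_two_le {u v : ℝ} (hv : 1 ≤ v) (hvu : v ≤ u) :
    logb 2 u - logb 2 v ≤ 2 * (u - v) := by
  have hv0 : 0 < v := by linarith
  have hlog2 : 1 / 2 < log 2 := by linarith [log_two_gt_d9]
  have hlog_ratio : log (u / v) ≤ u - v :=
    calc log (u / v) ≤ u / v - 1 := log_le_sub_one_of_pos (div_pos (by linarith) hv0)
      _ = (u - v) / v := by field_simp
      _ ≤ u - v := div_le_self (by linarith) hv
  rw [← logb_div (by linarith) hv0.ne', logb, div_le_iff₀ (by linarith)]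
  nlinarith

lemma lg_sub_lg_le {x y : ℝ} (hy : 0 ≤ y) (hyx : y ≤ x) : lg x - lg y ≤ 2 * (x - y) := by
  rw [lg_eq_logb_max_one (hy.trans hyx), lg_eq_logb_max_one hy]
  calc logb 2 (max x 1) - logb 2 (max y 1) ≤ 2 * (max x 1 - max y 1) :=
        logb_two_sub_logb_two_le (le_max_right y 1) (max_le_max_right 1 hyx)
    _ ≤ 2 * (x - y) := by
        have := max_sub_max_le_max x 1 y 1
        rw [sub_self, max_eq_left (sub_nonneg.mpr hyx)] at this
        linarith

/-- If `1 ≤ s ≤ b ≤ a`, then `lg lg (a/s) − lg lg (b/s) ≤ 2·(log₂ a − log₂ b)`: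
the increase of a rank `lg lg (mass/size)` when the mass steps up from `b` to `a`. -/
theorem stmt_15 (s b a : ℝ) (hs : 1 ≤ s) (hsb : s ≤ b) (hba : b ≤ a) :
    lg (lg (a / s)) - lg (lg (b / s)) ≤ 2 * (Real.logb 2 a - Real.logb 2 b) := by
  have hs0 : 0 < s := by linarith
  have hbs : 1 ≤ b / s := (one_le_div hs0).mpr hsb
  have has : 1 ≤ a / s := (one_le_div hs0).mpr (hsb.trans hba)
  rw [lg_of_one_le hbs, lg_of_one_le has, logb_div (by linarith) hs0.ne',
    logb_div (by linarith) hs0.ne']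
  have hlog_le : logb 2 b ≤ logb 2 a := logb_le_logb_of_le one_lt_two (by linarith) hba
  have hlog_s : logb 2 s ≤ logb 2 b := logb_le_logb_of_le one_lt_two hs0 hsb
  convert lg_sub_lg_le (sub_nonneg.mpr hlog_s) (sub_le_sub_right hlog_le _) using 1
  ring
end
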